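/- arXiv:2105.14339 — 3 statements merged into one kernel-verified Lean document; each statement's English description precedes it below -/
import Mathlib

section
/- Let G be a finite simple graph with at least one edge and with no maximal independent set of cardinality 1, and let H be a graph with exactly one vertex, disjoint from G. Then the join G ∨ H is well-f-covered if and only if G is well-f-covered, G is well-covered, and f(G) = α(G) + 1. In that case f(G ∨ H) = f(G). -/
/-- `X` induces a forest in `G`: the subgraph induced by `X` is acyclic. -/
def IsInducedForest {V : Type*} (G : SimpleGraph V) (X : Finset V) : Prop :=
  (G.induce (X : Set V)).IsAcyclic

/-- `X` is a maximal induced forest of `G`. -/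
def IsMaximalInducedForest {V : Type*} (G : SimpleGraph V) (X : Finset V) : Prop :=
  IsInducedForest G X ∧ ∀ Y : Finset V, X ⊂ Y → ¬ IsInducedForest G Y

/-- The forest number of `G`: maximum cardinality of an induced forest. -/
noncomputable def forestNum {V : Type*} (G : SimpleGraph V) : ℕ :=
  sSup {n | ∃ X : Finset V, IsInducedForest G X ∧ X.card = n}

/-- `G` is well-f-covered: all maximal induced forests have the same cardinality. -/
def WellFCovered {V : Type*} (G : SimpleGraph V) : Prop :=
  ∀ X Y : Finset V, IsMaximalInducedForest G X → IsMaximalInducedForest G Y →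
    X.card = Y.card

def IsIndepFinset {V : Type*} (G : SimpleGraph V) (X : Finset V) : Prop :=
  ∀ ⦃u⦄, u ∈ X → ∀ ⦃v⦄, v ∈ X → ¬ G.Adj u v

def IsMaximalIndepSet {V : Type*} (G : SimpleGraph V) (X : Finset V) : Prop :=
  IsIndepFinset G X ∧ ∀ Y : Finset V, X ⊂ Y → ¬ IsIndepFinset G Y

noncomputable def indepNum {V : Type*} (G : SimpleGraph V) : ℕ :=
  sSup {n | ∃ X : Finset V, IsIndepFinset G X ∧ X.card = n}

def WellCovered {V : Type*} (G : SimpleGraph V) : Prop :=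
  ∀ X Y : Finset V, IsMaximalIndepSet G X → IsMaximalIndepSet G Y → X.card = Y.card

/-- The join of two graphs on disjoint vertex sets. -/
def joinGraph {V W : Type*} (G : SimpleGraph V) (H : SimpleGraph W) :
    SimpleGraph (V ⊕ W) where
  Adj a b :=
    match a, b with
    | Sum.inl u, Sum.inl v => G.Adj u v
    | Sum.inr u, Sum.inr v => H.Adj u v
    | Sum.inl _, Sum.inr _ => True
    | Sum.inr _, Sum.inl _ => True
  symm := ⟨by rintro (u|u) (v|v) h <;> first | exact h.symm | trivial⟩
  loopless := ⟨by rintro (u|u) h <;> exact SimpleGraph.irrefl _ h⟩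

/-! Let `w` be the vertex of `H`. A vertex set of `G ∨ H` avoiding `w` is an induced forest iff
its trace on `G` is one; a set containing `w`, which is adjacent to everything, is an induced
forest iff its trace on `G` is independent (an edge there closes a triangle with `w`, and
otherwise the set induces a star). As `G` has an edge, a maximal induced forest of `G` is not
independent, so the maximal induced forests of `G ∨ H` are exactly the maximal induced forests
`X` of `G` and the sets `S ∪ {w}` with `S` maximal independent in `G`, of sizes `|X|` and
`|S| + 1`. -/

open Finset

section Forests

open SimpleGraph

variable {V V' : Type*} {K : SimpleGraph V} {K' : SimpleGraph V'} {X : Finset V}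

lemma isInducedForest_empty (K : SimpleGraph V) : IsInducedForest K ∅ :=
  fun v => absurd v.2 (by simp)

lemma isIndepFinset_empty (K : SimpleGraph V) : IsIndepFinset K ∅ :=
  fun u hu => absurd hu (by simp)

lemma IsIndepFinset.mono {Y : Finset V} (h : IsIndepFinset K Y) (hXY : X ⊆ Y) :
    IsIndepFinset K X :=
  fun _ hu _ hv => h (hXY hu) (hXY hv)

lemma isInducedForest_map_iff (f : K ↪g K') (X : Finset V) :
    IsInducedForest K' (X.map f.toEmbedding) ↔ IsInducedForest K X := by
  unfold IsInducedForest
  rw [coe_map]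
  exact (Iso.isAcyclic_iff
    { Equiv.Set.image f _ f.injective with map_rel_iff' := f.map_adj_iff }).symm

lemma isIndepFinset_map_iff (f : K ↪g K') (X : Finset V) :
    IsIndepFinset K' (X.map f.toEmbedding) ↔ IsIndepFinset K X := by
  simp [IsIndepFinset]

variable [DecidableEq V]

lemma IsIndepFinset.isInducedForest_insert (hX : IsIndepFinset K X) (c : V) :
    IsInducedForest K (insert c X) := by
  refine (isAcyclic_starGraph (⟨c, by simp⟩ : ((insert c X : Finset V) : Set V))).anti ?_
  rintro ⟨a, ha⟩ ⟨b, hb⟩ hab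
  refine starGraph_adj.mpr ⟨hab.ne, ?_⟩
  by_contra! h
  simp only [coe_insert, Set.mem_insert_iff, mem_coe, ne_eq, Subtype.mk.injEq] at ha hb h
  exact hX (ha.resolve_left h.1) (hb.resolve_left h.2) hab

lemma isInducedForest_insert_iff {c : V} (hc : ∀ v ∈ X, K.Adj c v) :
    IsInducedForest K (insert c X) ↔ IsIndepFinset K X := by
  refine ⟨fun h u hu v hv huv => ?_, fun h => h.isInducedForest_insert c⟩
  refine h.cliqueFree le_rfl {⟨c, by simp⟩, ⟨u, by simp [hu]⟩, ⟨v, by simp [hv]⟩} ?_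
  exact is3Clique_triple_iff.mpr ⟨hc u hu, hc v hv, huv⟩

lemma IsMaximalInducedForest.not_isIndepFinset (hK : ∃ u v, K.Adj u v)
    (hX : IsMaximalInducedForest K X) : ¬ IsIndepFinset K X := by
  intro hind
  by_cases hout : ∃ v, v ∉ X
  · obtain ⟨v, hv⟩ := hout
    exact hX.2 _ (ssubset_insert hv) (hind.isInducedForest_insert v)
  · push Not at hout
    obtain ⟨u, v, huv⟩ := hK
    exact hind (hout u) (hout v) huv

end Forests

section Numbers

variable {α V : Type*} [Fintype α] [Fintype V] {K : SimpleGraph V} {X : Finset V}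

lemma exists_maximal_card_eq_sSup (P : Finset α → Prop) (h0 : P ∅) :
    ∃ X, (P X ∧ ∀ Y, X ⊂ Y → ¬ P Y) ∧ X.card = sSup {n | ∃ X, P X ∧ X.card = n} := by
  have hbdd : BddAbove {n | ∃ X, P X ∧ X.card = n} :=
    ⟨Fintype.card α, by rintro _ ⟨X, -, rfl⟩; exact X.card_le_univ⟩
  obtain ⟨X, hX, hXc⟩ :=
    Nat.sSup_mem (s := {n | ∃ X, P X ∧ X.card = n}) ⟨0, ∅, h0, card_empty⟩ hbdd
  refine ⟨X, ⟨hX, fun Y hXY hY => ?_⟩, hXc⟩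
  have := le_csSup hbdd ⟨Y, hY, rfl⟩
  have := card_lt_card hXY
  omega

lemma exists_isMaximalInducedForest_card_eq_forestNum (K : SimpleGraph V) :
    ∃ X, IsMaximalInducedForest K X ∧ X.card = forestNum K :=
  exists_maximal_card_eq_sSup _ (isInducedForest_empty K)

lemma exists_isMaximalIndepSet_card_eq_indepNum (K : SimpleGraph V) :
    ∃ X, IsMaximalIndepSet K X ∧ X.card = indepNum K :=
  exists_maximal_card_eq_sSup _ (isIndepFinset_empty K)

lemma WellFCovered.card_eq_forestNum (h : WellFCovered K) (hX : IsMaximalInducedForest K X) :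
    X.card = forestNum K := by
  obtain ⟨Y, hY, hYc⟩ := exists_isMaximalInducedForest_card_eq_forestNum K
  exact (h X Y hX hY).trans hYc

lemma WellCovered.card_eq_indepNum (h : WellCovered K) (hX : IsMaximalIndepSet K X) :
    X.card = indepNum K := by
  obtain ⟨Y, hY, hYc⟩ := exists_isMaximalIndepSet_card_eq_indepNum K
  exact (h X Y hX hY).trans hYc

end Numbers

namespace Finset

variable {α β : Type*} {s₁ s₂ : Finset α} {t₁ t₂ : Finset β}

lemma disjSum_subset_disjSum_iff : s₁.disjSum t₁ ⊆ s₂.disjSum t₂ ↔ s₁ ⊆ s₂ ∧ t₁ ⊆ t₂ := by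
  simp [disjSum_subset]

lemma ssubset_of_disjSum_ssubset_disjSum (h : s₁.disjSum t₁ ⊂ s₂.disjSum t₁) : s₁ ⊂ s₂ :=
  ssubset_iff_subset_ne.mpr
    ⟨(disjSum_subset_disjSum_iff.mp h.subset).1, by rintro rfl; exact h.ne rfl⟩

lemma exists_eq_disjSum_empty_or_singleton [Subsingleton β] (u : Finset (α ⊕ β)) :
    ∃ s : Finset α, u = s.disjSum ∅ ∨ ∃ b, u = s.disjSum {b} := by
  refine ⟨u.toLeft, ?_⟩
  rcases u.toRight.eq_empty_or_nonempty with hu | ⟨b, hb⟩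
  · exact Or.inl (by rw [← hu, toLeft_disjSum_toRight])
  · refine Or.inr ⟨b, ?_⟩
    rw [← eq_singleton_iff_unique_mem.mpr ⟨hb, fun x _ => Subsingleton.elim x b⟩,
      toLeft_disjSum_toRight]

end Finset

section Join

variable {V W : Type*} {G : SimpleGraph V} {H : SimpleGraph W} {X : Finset V}

def joinGraphInl (G : SimpleGraph V) (H : SimpleGraph W) : G ↪g joinGraph G H :=
  ⟨Function.Embedding.inl, Iff.rfl⟩

lemma isInducedForest_join_disjSum_empty_iff :
    IsInducedForest (joinGraph G H) (X.disjSum ∅) ↔ IsInducedForest G X := by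
  rw [disjSum_empty]
  exact isInducedForest_map_iff (joinGraphInl G H) X

lemma isInducedForest_join_disjSum_singleton_iff [DecidableEq V] [DecidableEq W] (w : W) :
    IsInducedForest (joinGraph G H) (X.disjSum {w}) ↔ IsIndepFinset G X := by
  have hX : X.disjSum {w} = insert (Sum.inr w) (X.map (joinGraphInl G H).toEmbedding) := by
    ext (v | x) <;> simp [joinGraphInl]
  rw [hX, isInducedForest_insert_iff, isIndepFinset_map_iff]
  simp only [mem_map]
  rintro _ ⟨u, -, rfl⟩
  trivial

lemma isMaximalInducedForest_join_disjSum_empty_iff [DecidableEq V] [DecidableEq W]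
    [Subsingleton W] (hG : ∃ u v, G.Adj u v) :
    IsMaximalInducedForest (joinGraph G H) (X.disjSum ∅) ↔ IsMaximalInducedForest G X := by
  refine ⟨fun ⟨hA, hmax⟩ => ⟨isInducedForest_join_disjSum_empty_iff.mp hA, fun Y hXY hY => ?_⟩,
    fun hX => ⟨isInducedForest_join_disjSum_empty_iff.mpr hX.1, fun B hXB hB => ?_⟩⟩
  · exact hmax _ (disjSum_strictMono_left ∅ hXY) (isInducedForest_join_disjSum_empty_iff.mpr hY)
  · obtain ⟨Y, rfl | ⟨w, rfl⟩⟩ := exists_eq_disjSum_empty_or_singleton B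
    · exact hX.2 Y (ssubset_of_disjSum_ssubset_disjSum hXB)
        (isInducedForest_join_disjSum_empty_iff.mp hB)
    · exact hX.not_isIndepFinset hG (((isInducedForest_join_disjSum_singleton_iff w).mp hB).mono
        (disjSum_subset_disjSum_iff.mp hXB.subset).1)

lemma isMaximalInducedForest_join_disjSum_singleton_iff [DecidableEq V] [DecidableEq W]
    [Subsingleton W] (w : W) :
    IsMaximalInducedForest (joinGraph G H) (X.disjSum {w}) ↔ IsMaximalIndepSet G X := by
  refine ⟨fun ⟨hA, hmax⟩ =>
      ⟨(isInducedForest_join_disjSum_singleton_iff w).mp hA, fun Y hXY hY => ?_⟩,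
    fun hX => ⟨(isInducedForest_join_disjSum_singleton_iff w).mpr hX.1, fun B hXB hB => ?_⟩⟩
  · exact hmax _ (disjSum_strictMono_left _ hXY)
      ((isInducedForest_join_disjSum_singleton_iff w).mpr hY)
  · obtain ⟨Y, rfl | ⟨w', rfl⟩⟩ := exists_eq_disjSum_empty_or_singleton B
    · simpa using hXB.subset (inr_mem_disjSum.mpr (mem_singleton_self w))
    · rw [Subsingleton.elim w' w] at hXB hB
      exact hX.2 Y (ssubset_of_disjSum_ssubset_disjSum hXB)
        ((isInducedForest_join_disjSum_singleton_iff w).mp hB)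

end Join

theorem stmt16_general {V W : Type*} [Fintype V] [Fintype W] [DecidableEq V] [DecidableEq W]
    (G : SimpleGraph V) (H : SimpleGraph W) (hW : Fintype.card W = 1)
    (hGe : ∃ u v, G.Adj u v) :
    (WellFCovered (joinGraph G H) ↔
      WellFCovered G ∧ WellCovered G ∧ forestNum G = indepNum G + 1) ∧
    (WellFCovered (joinGraph G H) → forestNum (joinGraph G H) = forestNum G) := by
  obtain ⟨w, -⟩ := Fintype.card_eq_one_iff.mp hW
  have : Subsingleton W := Fintype.card_le_one_iff_subsingleton.mp hW.le
  have hmaxL (X : Finset V) := isMaximalInducedForest_join_disjSum_empty_iff (H := H) hGe (X := X)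
  have hmaxR (w' : W) (X : Finset V) :=
    isMaximalInducedForest_join_disjSum_singleton_iff (G := G) (H := H) w' (X := X)
  obtain ⟨F, hF, hFc⟩ := exists_isMaximalInducedForest_card_eq_forestNum G
  obtain ⟨S, hS, hSc⟩ := exists_isMaximalIndepSet_card_eq_indepNum G
  have hforward (hJ : WellFCovered (joinGraph G H)) :
      WellFCovered G ∧ WellCovered G ∧ forestNum G = indepNum G + 1 :=
    ⟨fun X Y hX hY => by simpa using hJ _ _ ((hmaxL X).mpr hX) ((hmaxL Y).mpr hY),
      fun X Y hX hY => by simpa using hJ _ _ ((hmaxR w X).mpr hX) ((hmaxR w Y).mpr hY),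
      by simpa [hFc, hSc] using hJ _ _ ((hmaxL F).mpr hF) ((hmaxR w S).mpr hS)⟩
  refine ⟨⟨hforward, fun ⟨hfc, hc, hfi⟩ => ?_⟩, fun hJ => ?_⟩
  · suffices h : ∀ A, IsMaximalInducedForest (joinGraph G H) A → A.card = forestNum G from
      fun A B hA hB => (h A hA).trans (h B hB).symm
    intro A hA
    obtain ⟨Y, rfl | ⟨w', rfl⟩⟩ := exists_eq_disjSum_empty_or_singleton A
    · simpa using hfc.card_eq_forestNum ((hmaxL Y).mp hA)
    · rw [card_disjSum, card_singleton, hc.card_eq_indepNum ((hmaxR w' Y).mp hA), hfi]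
  · simpa [hFc] using (hJ.card_eq_forestNum ((hmaxL F).mpr hF)).symm

/-- Let `G` have at least one edge and no maximal independent set of
cardinality 1, and let `H` be a graph with exactly one vertex. Then the join `G ∨ H`
is well-f-covered iff `G` is both well-f-covered and well-covered and
`f(G) = α(G) + 1`. In that case `f(G ∨ H) = f(G)`. -/
theorem stmt16 {V W : Type*} [Fintype V] [Fintype W] [DecidableEq V] [DecidableEq W]
    (G : SimpleGraph V) (H : SimpleGraph W) (hW : Fintype.card W = 1)
    (hGe : ∃ u v, G.Adj u v)
    (hG1 : ¬ ∃ X : Finset V, IsMaximalIndepSet G X ∧ X.card = 1) :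
    (WellFCovered (joinGraph G H) ↔
      WellFCovered G ∧ WellCovered G ∧ forestNum G = indepNum G + 1) ∧
    (WellFCovered (joinGraph G H) → forestNum (joinGraph G H) = forestNum G) :=
  stmt16_general G H hW hGe
end

section
/- For n ≥ 4, the wheel W_n on n vertices (the join of a cycle on n - 1 vertices with a single additional vertex adjacent to all cycle vertices) is well-f-covered if and only if n = 4 or n = 5. -/
/-!
A maximal induced forest of the wheel `C_m + K_1` either avoids the hub, and is then the cycle
minus one vertex (`m - 1` vertices), or contains the hub, and is then the hub together with a
maximal independent set `S` of `C_m` (`|S| + 1` vertices). So the wheel is well-f-covered iff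
every maximal independent set of `C_m` has `m - 2` vertices. Such a set dominates the cycle,
so `m ≤ 3|S|`, and it is disjoint from its translate `S + 1`, so `2|S| ≤ m`: this forces
`|S| = m - 2` for `m = 3, 4` and rules it out for `m ≥ 5`.
-/

open SimpleGraph Finset

variable {V W : Type*} {G : SimpleGraph V} {H : SimpleGraph W}

/-- A vertex of maximal rank on a cycle would have two distinct lower neighbours on it. -/
theorem SimpleGraph.isAcyclic_of_rank {α : Type*} [LinearOrder α]
    (f : V → α) (hne : ∀ ⦃u v⦄, G.Adj u v → f u ≠ f v)
    (hlower : ∀ ⦃v u w⦄, G.Adj v u → G.Adj v w → f u < f v → f w < f v → u = w) :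
    G.IsAcyclic := by
  classical
  intro v c hc
  obtain ⟨x, hx, hmax⟩ := c.support.toFinset.exists_max_image f ⟨v, by simp⟩
  rw [List.mem_toFinset] at hx
  set c' := c.rotate x hx
  have hc' : c'.IsCycle := hc.rotate hx
  have hlt : ∀ ⦃y⦄, y ∈ c'.support → G.Adj x y → f y < f x := fun y hy hxy =>
    (hmax y (by simpa [c', Walk.mem_support_rotate_iff] using hy)).lt_of_ne (hne hxy).symm
  exact hc'.snd_ne_penultimate <| hlower (c'.adj_snd hc'.not_nil)
    (c'.adj_penultimate hc'.not_nil).symm (hlt (c'.getVert_mem_support _) (c'.adj_snd hc'.not_nil))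
    (hlt (c'.getVert_mem_support _) (c'.adj_penultimate hc'.not_nil).symm)

theorem isMaximalInducedForest_iff_maximal {X : Finset V} :
    IsMaximalInducedForest G X ↔ Maximal (IsInducedForest G) X :=
  maximal_iff_forall_gt.symm

theorem IsInducedForest.subset {X Y : Finset V} (hY : IsInducedForest G Y) (hXY : X ⊆ Y) :
    IsInducedForest G X :=
  hY.embedding (G.induceHomOfLE (by simpa using hXY))

theorem isInducedForest_map_iff_s17 (φ : G ↪g H) (S : Finset V) :
    IsInducedForest H (S.map φ.toEmbedding) ↔ IsInducedForest G S := by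
  let e : G.induce (S : Set V) ≃g H.induce (φ '' S) :=
    ⟨Equiv.Set.image φ S φ.injective, φ.map_rel_iff⟩
  rw [IsInducedForest, Finset.coe_map]
  exact e.isAcyclic_iff.symm

theorem not_isInducedForest_of_adj {X : Finset V} {a b c : V} (ha : a ∈ X) (hb : b ∈ X)
    (hc : c ∈ X) (hab : G.Adj a b) (hbc : G.Adj b c) (hca : G.Adj c a) :
    ¬ IsInducedForest G X := by
  intro hX
  let a' : (X : Set V) := ⟨a, ha⟩
  let b' : (X : Set V) := ⟨b, hb⟩
  let c' : (X : Set V) := ⟨c, hc⟩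
  have hab' : a' ≠ b' := fun h => hab.ne (congrArg Subtype.val h)
  have hbc' : b' ≠ c' := fun h => hbc.ne (congrArg Subtype.val h)
  have hca' : c' ≠ a' := fun h => hca.ne (congrArg Subtype.val h)
  refine hX (.cons (show (G.induce _).Adj a' b' from hab)
    (.cons (show (G.induce _).Adj b' c' from hbc) (.cons (show (G.induce _).Adj c' a' from hca)
    .nil))) ?_
  simp [Walk.cons_isCycle_iff, hab', hbc', hca', hab'.symm, hca'.symm]

theorem IsIndepFinset.subset {X Y : Finset V} (hY : IsIndepFinset G Y) (hXY : X ⊆ Y) :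
    IsIndepFinset G X :=
  fun _ hu _ hv => hY (hXY hu) (hXY hv)

abbrev cone (G : SimpleGraph V) : SimpleGraph (V ⊕ Unit) := joinGraph G ⊥

def coneInl (G : SimpleGraph V) : G ↪g cone G := ⟨.inl, Iff.rfl⟩

theorem isInducedForest_cone_map_inl_iff {S : Finset V} :
    IsInducedForest (cone G) (S.map .inl) ↔ IsInducedForest G S :=
  isInducedForest_map_iff_s17 (coneInl G) S

theorem isInducedForest_cone_insert_inr_iff [DecidableEq V] {S : Finset V} :
    IsInducedForest (cone G) (insert (Sum.inr ()) (S.map .inl)) ↔ IsIndepFinset G S := by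
  refine ⟨fun hF u hu v hv huv => not_isInducedForest_of_adj (a := .inr ()) (b := .inl u)
    (c := .inl v) (by simp) (by simpa using hu) (by simpa using hv) trivial huv trivial hF,
    fun hS => ?_⟩
  refine isAcyclic_of_rank (fun x => x.1.isLeft.toNat) ?_ ?_
  · rintro ⟨u | u, hu⟩ ⟨v | v, hv⟩ huv
    · exact absurd huv (hS (by simpa using hu) (by simpa using hv))
    all_goals simp_all
  · rintro ⟨v | v, hv⟩ ⟨u | u, hu⟩ ⟨w | w, hw⟩ _ _ _ _ <;> simp_all

theorem Finset.insert_inl_map_inl [DecidableEq V] (v : V) (S : Finset V) :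
    insert (Sum.inl v) (S.map .inl) = (insert v S).map (.inl : V ↪ V ⊕ Unit) :=
  (map_insert ..).symm

theorem maximal_isInducedForest_cone_map_inl_iff [DecidableEq V] {S : Finset V} :
    Maximal (IsInducedForest (cone G)) (S.map .inl) ↔
      Maximal (IsInducedForest G) S ∧ ¬ IsIndepFinset G S := by
  rw [Finset.maximal_iff_forall_insert (fun _ _ h hst => h.subset hst),
    Finset.maximal_iff_forall_insert (fun _ _ h hst => h.subset hst),
    isInducedForest_cone_map_inl_iff, Sum.forall]
  simp only [Finset.insert_inl_map_inl, isInducedForest_cone_map_inl_iff, Unique.forall_iff,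
    PUnit.default_eq_unit, isInducedForest_cone_insert_inr_iff]
  simp [and_assoc]

theorem maximal_isInducedForest_cone_insert_inr_iff [DecidableEq V] {S : Finset V} :
    Maximal (IsInducedForest (cone G)) (insert (Sum.inr ()) (S.map .inl)) ↔
      Maximal (IsIndepFinset G) S := by
  rw [Finset.maximal_iff_forall_insert (fun _ _ h hst => h.subset hst),
    Finset.maximal_iff_forall_insert (fun _ _ h hst => h.subset hst),
    isInducedForest_cone_insert_inr_iff, Sum.forall]
  simp only [Finset.insert_comm _ (Sum.inr ()), Finset.insert_inl_map_inl,
    isInducedForest_cone_insert_inr_iff]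
  simp

theorem Finset.card_insert_inr_map_inl [DecidableEq V] (S : Finset V) :
    #(insert (Sum.inr ()) (S.map (.inl : V ↪ V ⊕ Unit))) = #S + 1 := by
  simp

theorem Finset.eq_map_inl_or_eq_insert_inr_map_inl [DecidableEq V] (X : Finset (V ⊕ Unit)) :
    X = X.toLeft.map .inl ∨ X = insert (Sum.inr ()) (X.toLeft.map .inl) := by
  by_cases h : Sum.inr () ∈ X
  · right; ext (v | _) <;> simp [h]
  · left; ext (v | _) <;> simp [h]

section CycleGraph

variable {m : ℕ}

theorem not_isAcyclic_cycleGraph (hm : 3 ≤ m) : ¬ (cycleGraph m).IsAcyclic := by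
  obtain ⟨k, rfl⟩ := Nat.exists_eq_add_of_le' hm
  exact fun h => h _ cycleGraph.isCycle_cycle

theorem cycleGraph_adj_sub_right [NeZero m] {i j : Fin m} (w : Fin m) :
    (cycleGraph m).Adj (i - w) (j - w) ↔ (cycleGraph m).Adj i j := by
  simp only [cycleGraph_adj', sub_sub_sub_cancel_right]

theorem val_add_one_eq_of_cycleGraph_adj {a b : Fin m} (h : (cycleGraph m).Adj a b)
    (hb : 0 < b.val) (hlt : b.val < a.val) : b.val + 1 = a.val := by
  rcases cycleGraph_adj'.mp h with h | h
  · rw [Fin.coe_sub_iff_le.mpr hlt.le] at h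
    omega
  · rw [Fin.coe_sub_iff_lt.mpr hlt] at h
    omega

theorem eq_add_one_of_val_sub_eq_one [NeZero m] {a b : Fin m} (h : (a - b).val = 1) :
    a = b + 1 := by
  have hm : 1 < m := h ▸ (a - b).isLt
  rw [← sub_eq_iff_eq_add', Fin.ext_iff, h, Fin.val_one', Nat.mod_eq_of_lt hm]

theorem isInducedForest_cycleGraph_iff [NeZero m] (hm : 3 ≤ m) {S : Finset (Fin m)} :
    IsInducedForest (cycleGraph m) S ↔ S ≠ univ := by
  refine ⟨?_, fun hS => ?_⟩
  · rintro hS rfl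
    exact not_isAcyclic_cycleGraph hm <|
      hS.comap ⟨fun i => ⟨i, by simp⟩, id⟩ fun i j h => congrArg Subtype.val h
  obtain ⟨w, hw⟩ : ∃ w, w ∉ S := by simpa [eq_univ_iff_forall] using hS
  have hpos : ∀ x : (S : Set (Fin m)), 0 < (x.1 - w).val := fun x =>
    Nat.pos_of_ne_zero fun h => hw (sub_eq_zero.mp (Fin.ext h) ▸ x.2)
  -- rank by the distance from `w` along the cycle: only the predecessor of a vertex ranks lower
  refine isAcyclic_of_rank (fun x => (x.1 - w).val) ?_ ?_
  · intro x y hxy h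
    exact hxy.ne (Subtype.ext (sub_left_inj.mp (Fin.ext h)))
  · intro x y z hxy hxz hy hz
    have hy' : (y.1 - w).val + 1 = (x.1 - w).val :=
      val_add_one_eq_of_cycleGraph_adj ((cycleGraph_adj_sub_right w).mpr hxy) (hpos y) hy
    have hz' : (z.1 - w).val + 1 = (x.1 - w).val :=
      val_add_one_eq_of_cycleGraph_adj ((cycleGraph_adj_sub_right w).mpr hxz) (hpos z) hz
    exact Subtype.ext (sub_left_inj.mp (Fin.ext (by omega : (y.1 - w).val = (z.1 - w).val)))

theorem maximal_isInducedForest_cycleGraph_erase [NeZero m] (hm : 3 ≤ m) (w : Fin m) :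
    Maximal (IsInducedForest (cycleGraph m)) (univ.erase w) := by
  rw [maximal_iff_forall_insert (fun _ _ h hst => h.subset hst),
    isInducedForest_cycleGraph_iff hm]
  refine ⟨fun h => notMem_erase w univ (h.symm ▸ mem_univ w), fun x hx => ?_⟩
  obtain rfl : x = w := by simpa using hx
  simp [isInducedForest_cycleGraph_iff hm]

theorem card_add_one_of_maximal_isInducedForest_cycleGraph [NeZero m] (hm : 3 ≤ m)
    {S : Finset (Fin m)} (hS : Maximal (IsInducedForest (cycleGraph m)) S) : #S + 1 = m := by
  rw [maximal_iff_forall_insert (fun _ _ h hst => h.subset hst),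
    isInducedForest_cycleGraph_iff hm] at hS
  obtain ⟨w, hw⟩ : ∃ w, w ∉ S := by simpa [eq_univ_iff_forall] using hS.1
  have hfull : insert w S = univ := by simpa [isInducedForest_cycleGraph_iff hm] using hS.2 w hw
  simpa [card_insert_of_notMem hw] using congrArg card hfull

theorem two_mul_card_le_of_isIndepFinset_cycleGraph (hm : 2 ≤ m) {S : Finset (Fin m)}
    (hS : IsIndepFinset (cycleGraph m) S) : 2 * #S ≤ m := by
  have : NeZero m := ⟨by omega⟩
  have hdisj : Disjoint S (S.image (· + 1)) := by
    refine disjoint_left.mpr fun s hs hs' => ?_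
    obtain ⟨t, ht, rfl⟩ := mem_image.mp hs'
    refine hS hs ht (cycleGraph_adj'.mpr (Or.inl ?_))
    simp [Nat.mod_eq_of_lt (show 1 < m by omega)]
  calc 2 * #S = #(S ∪ S.image (· + 1)) := by
        rw [card_union_of_disjoint hdisj, card_image_of_injective _ (add_left_injective 1)]; ring
    _ ≤ m := by simpa using card_le_univ (S ∪ S.image (· + 1))

theorem le_three_mul_card_of_maximal_isIndepFinset_cycleGraph [NeZero m] {S : Finset (Fin m)}
    (hS : Maximal (IsIndepFinset (cycleGraph m)) S) : m ≤ 3 * #S := by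
  rw [maximal_iff_forall_insert (fun _ _ h hst => h.subset hst)] at hS
  have hdom : ∀ v ∉ S, ∃ s ∈ S, (cycleGraph m).Adj v s := by
    intro v hv
    by_contra! hnone
    refine hS.2 v hv fun a ha b hb hab => ?_
    rw [mem_insert] at ha hb
    rcases ha with rfl | ha <;> rcases hb with rfl | hb
    · exact hab.ne rfl
    · exact hnone b hb hab
    · exact hnone a ha hab.symm
    · exact hS.1 ha hb hab
  have hcover : univ ⊆ S.biUnion fun s => {s - 1, s, s + 1} := by
    intro v _
    by_cases hv : v ∈ S
    · exact mem_biUnion.mpr ⟨v, hv, by simp⟩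
    obtain ⟨s, hs, hvs⟩ := hdom v hv
    refine mem_biUnion.mpr ⟨s, hs, ?_⟩
    rcases cycleGraph_adj'.mp hvs with h | h
    · simp [eq_add_one_of_val_sub_eq_one h]
    · simp [eq_sub_of_add_eq (eq_add_one_of_val_sub_eq_one h).symm]
  calc m = #(univ : Finset (Fin m)) := by simp
    _ ≤ #S * 3 :=
      (card_le_card hcover).trans (card_biUnion_le_card_mul _ _ _ fun _ _ => card_le_three)
    _ = 3 * #S := mul_comm _ _

end CycleGraph

theorem wellFCovered_cone_cycleGraph_iff {m : ℕ} [NeZero m] (hm : 3 ≤ m) :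
    WellFCovered (cone (cycleGraph m)) ↔
      ∀ S, Maximal (IsIndepFinset (cycleGraph m)) S → #S + 2 = m := by
  simp only [WellFCovered, isMaximalInducedForest_iff_maximal]
  have herase := maximal_isInducedForest_cycleGraph_erase hm 0
  have herase_card := card_add_one_of_maximal_isInducedForest_cycleGraph hm herase
  have hpath : Maximal (IsInducedForest (cone (cycleGraph m))) ((univ.erase 0).map .inl) := by
    refine maximal_isInducedForest_cone_map_inl_iff.mpr ⟨herase, fun hind => ?_⟩
    have := two_mul_card_le_of_isIndepFinset_cycleGraph (by omega) hind
    omega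
  constructor
  · intro hW S hS
    have := hW _ _ hpath (maximal_isInducedForest_cone_insert_inr_iff.mpr hS)
    rw [card_map, card_insert_inr_map_inl] at this
    omega
  · intro h X Y hX hY
    suffices hsize : ∀ X, Maximal (IsInducedForest (cone (cycleGraph m))) X → #X + 1 = m by
      have := hsize X hX
      have := hsize Y hY
      omega
    intro X hX
    rcases X.eq_map_inl_or_eq_insert_inr_map_inl with hXe | hXe <;> rw [hXe] at hX ⊢
    · simpa using card_add_one_of_maximal_isInducedForest_cycleGraph hm
        (maximal_isInducedForest_cone_map_inl_iff.mp hX).1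
    · rw [card_insert_inr_map_inl]
      have := h _ (maximal_isInducedForest_cone_insert_inr_iff.mp hX)
      omega

/-- For `n ≥ 4`, the wheel `W_n` on `n` vertices — the join of a cycle
on `n - 1` vertices with a single additional vertex adjacent to all cycle vertices —
is well-f-covered if and only if `n = 4` or `n = 5`. -/
theorem stmt17 (n : ℕ) (hn : 4 ≤ n) :
    WellFCovered (joinGraph (SimpleGraph.cycleGraph (n - 1)) (⊥ : SimpleGraph Unit)) ↔
      (n = 4 ∨ n = 5) := by
  have : NeZero (n - 1) := ⟨by omega⟩
  refine (wellFCovered_cone_cycleGraph_iff (by omega)).trans ⟨fun h => ?_, fun h S hS => ?_⟩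
  · obtain ⟨S, -, hS⟩ := Finite.exists_le_maximal (p := IsIndepFinset (cycleGraph (n - 1)))
      (a := ∅) (by simp [IsIndepFinset])
    have := two_mul_card_le_of_isIndepFinset_cycleGraph (by omega) hS.prop
    have := h S hS
    omega
  · have := two_mul_card_le_of_isIndepFinset_cycleGraph (by omega) hS.prop
    have := le_three_mul_card_of_maximal_isIndepFinset_cycleGraph hS
    omega
end

section
/- For r ≥ 1 and s ≥ 1, the complete bipartite graph K_{r,s} is well-f-covered if and only if r = s or r = 1 or s = 1. -/
open Finset SimpleGraph Sum

section InducedForest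

variable {V V' : Type*} {G : SimpleGraph V} {G' : SimpleGraph V'} {X : Finset V}

lemma isInducedForest_of_forall_adj_mem {S : Finset V} (hS : #S ≤ 1)
    (h : ∀ u ∈ X, ∀ v ∈ X, G.Adj u v → u ∈ S ∨ v ∈ S) : IsInducedForest G X := by
  obtain hS₀ | ⟨c, rfl⟩ := Nat.le_one_iff_eq_zero_or_eq_one.mp hS |>.imp card_eq_zero.mp
    card_eq_one.mp
  · refine isAcyclic_bot.comap ⟨Subtype.val, fun {u v} huv ↦ ?_⟩ Subtype.val_injective
    simpa [hS₀] using h u u.2 v v.2 huv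
  · refine (isAcyclic_starGraph c).comap ⟨Subtype.val, fun {u v} huv ↦ ?_⟩
      Subtype.val_injective
    simpa [starGraph_adj, huv.ne] using h u u.2 v v.2 huv

lemma SimpleGraph.Iso.isInducedForest_map_iff (e : G ≃g G') :
    IsInducedForest G' (X.map e.toEquiv.toEmbedding) ↔ IsInducedForest G X :=
  Iso.isAcyclic_iff
    { toEquiv := e.toEquiv.subtypeEquiv fun v ↦ by simp
      map_rel_iff' := by simp [e.map_adj_iff] } |>.symm

lemma IsMaximalInducedForest.map (e : G ≃g G') (hX : IsMaximalInducedForest G X) :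
    IsMaximalInducedForest G' (X.map e.toEquiv.toEmbedding) := by
  refine ⟨e.isInducedForest_map_iff.2 hX.1, fun Y hXY hY ↦
    hX.2 (Y.map e.symm.toEquiv.toEmbedding) ?_ (e.symm.isInducedForest_map_iff.2 hY)⟩
  rw [← map_ssubset_map (f := e.toEquiv.toEmbedding)]
  simpa [Finset.map_map] using hXY

end InducedForest

section CompleteBipartite

variable {α β : Type*} {X : Finset (α ⊕ β)}

lemma not_isInducedForest_completeBipartiteGraph (hα : 1 < #X.toLeft) (hβ : 1 < #X.toRight) :
    ¬ IsInducedForest (completeBipartiteGraph α β) X := by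
  obtain ⟨a₀, ha₀, a₁, ha₁, ha⟩ := one_lt_card.mp hα
  obtain ⟨b₀, hb₀, b₁, hb₁, hb⟩ := one_lt_card.mp hβ
  rw [mem_toLeft] at ha₀ ha₁
  rw [mem_toRight] at hb₀ hb₁
  let H := (completeBipartiteGraph α β).induce (X : Set (α ⊕ β))
  -- in a forest the paths `a₀ - b₀ - a₁` and `a₀ - b₁ - a₁` coincide
  let p (b : β) (hb : inr b ∈ X) : H.Walk ⟨inl a₀, ha₀⟩ ⟨inl a₁, ha₁⟩ :=
    .cons (v := ⟨inr b, hb⟩) (by simp [H]) (.cons (by simp [H]) .nil)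
  have hp : ∀ b hb, (p b hb).IsPath := by simp [p, Walk.cons_isPath_iff, ha]
  intro hX
  have hpath := (hX.subsingleton_path _ _).elim ⟨_, hp b₀ hb₀⟩ ⟨_, hp b₁ hb₁⟩
  exact hb (by simpa [p] using congrArg (fun q : H.Path _ _ ↦ q.1.getVert 1) hpath)

lemma isInducedForest_completeBipartiteGraph_iff :
    IsInducedForest (completeBipartiteGraph α β) X ↔ #X.toLeft ≤ 1 ∨ #X.toRight ≤ 1 := by
  refine ⟨fun hX ↦ ?_, ?_⟩
  · by_contra! h
    exact not_isInducedForest_completeBipartiteGraph h.1 h.2 hX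
  rintro (h | h)
  · refine isInducedForest_of_forall_adj_mem (S := X.toLeft.map .inl) (by rwa [card_map]) ?_
    rintro (u | u) hu (v | v) hv huv <;> simp_all
  · refine isInducedForest_of_forall_adj_mem (S := X.toRight.map .inr) (by rwa [card_map]) ?_
    rintro (u | u) hu (v | v) hv huv <;> simp_all

def completeBipartiteGraphSwap :
    completeBipartiteGraph α β ≃g completeBipartiteGraph β α where
  toEquiv := Equiv.sumComm α β
  map_rel_iff' := by rintro (u | u) (v | v) <;> simp

lemma IsMaximalInducedForest.toRight_eq_univ [Fintype β]
    (hX : IsMaximalInducedForest (completeBipartiteGraph α β) X) (h : #X.toLeft ≤ 1) :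
    X.toRight = univ := by
  classical
  refine eq_univ_of_forall fun b ↦ mem_toRight.2 <| by_contra fun hb ↦ ?_
  refine hX.2 _ (ssubset_insert hb) (isInducedForest_completeBipartiteGraph_iff.2 (.inl ?_))
  rwa [toLeft_insert_inr]

lemma IsMaximalInducedForest.card_toLeft_eq_one [Nonempty α]
    (hX : IsMaximalInducedForest (completeBipartiteGraph α β) X) (h : #X.toLeft ≤ 1) :
    #X.toLeft = 1 := by
  classical
  refine le_antisymm h (one_le_card.2 ?_)
  by_contra hempty
  obtain ⟨a⟩ := ‹Nonempty α›
  have ha : inl a ∉ X := fun ha ↦ hempty ⟨a, mem_toLeft.2 ha⟩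
  refine hX.2 _ (ssubset_insert ha) (isInducedForest_completeBipartiteGraph_iff.2 (.inl ?_))
  simp [not_nonempty_iff_eq_empty.1 hempty]

lemma IsMaximalInducedForest.card_eq_of_card_toLeft_le_one [Nonempty α] [Fintype β]
    (hX : IsMaximalInducedForest (completeBipartiteGraph α β) X) (h : #X.toLeft ≤ 1) :
    #X = Fintype.card β + 1 := by
  rw [← card_toLeft_add_card_toRight, hX.card_toLeft_eq_one h, hX.toRight_eq_univ h, card_univ,
    add_comm]

lemma IsMaximalInducedForest.card_eq_of_card_toRight_le_one [Fintype α] [Nonempty β]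
    (hX : IsMaximalInducedForest (completeBipartiteGraph α β) X) (h : #X.toRight ≤ 1) :
    #X = Fintype.card α + 1 := by
  have hX' := hX.map completeBipartiteGraphSwap
  rw [← card_map (Equiv.sumComm α β).toEmbedding]
  exact hX'.card_eq_of_card_toLeft_le_one (by simpa [completeBipartiteGraphSwap] using h)

lemma exists_isMaximalInducedForest_card_eq [Nonempty α] [Fintype β]
    (hβ : 2 ≤ Fintype.card β) :
    ∃ X, IsMaximalInducedForest (completeBipartiteGraph α β) X ∧
      #X = Fintype.card β + 1 := by
  obtain ⟨a⟩ := ‹Nonempty α›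
  refine ⟨({a} : Finset α).disjSum univ,
    ⟨isInducedForest_completeBipartiteGraph_iff.2 (.inl (by simp)),
    fun Y hXY hY ↦ ?_⟩, by simp [add_comm]⟩
  have hright : Y.toRight = univ := univ_subset_iff.1 <| by
    simpa using toRight_subset_toRight hXY.subset
  have hleft : #Y.toLeft ≤ 1 := by
    refine (isInducedForest_completeBipartiteGraph_iff.1 hY).resolve_right ?_
    rw [hright, card_univ]
    omega
  have hcard := card_lt_card hXY
  rw [← card_toLeft_add_card_toRight (u := Y), hright, card_disjSum, card_singleton] at hcard
  omega

end CompleteBipartite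

theorem wellFCovered_completeBipartiteGraph_iff {α β : Type*} [Fintype α] [Fintype β]
    [Nonempty α] [Nonempty β] :
    WellFCovered (completeBipartiteGraph α β) ↔
      Fintype.card α = Fintype.card β ∨ Fintype.card α = 1 ∨ Fintype.card β = 1 := by
  constructor
  · intro hW
    by_contra! h
    have hα := Fintype.card_pos (α := α)
    have hβ := Fintype.card_pos (α := β)
    obtain ⟨X, hX, hXcard⟩ :=
      exists_isMaximalInducedForest_card_eq (α := α) (β := β) (by omega)
    obtain ⟨Y, hY, hYcard⟩ :=
      exists_isMaximalInducedForest_card_eq (α := β) (β := α) (by omega)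
    have := hW X _ hX (hY.map completeBipartiteGraphSwap)
    rw [card_map] at this
    omega
  · rintro (h | h | h) X Y hX hY
    · have hcard (Z) (hZ : IsMaximalInducedForest (completeBipartiteGraph α β) Z) :
          #Z = Fintype.card α + 1 := by
        rcases isInducedForest_completeBipartiteGraph_iff.1 hZ.1 with hZ' | hZ'
        · rw [h, hZ.card_eq_of_card_toLeft_le_one hZ']
        · exact hZ.card_eq_of_card_toRight_le_one hZ'
      rw [hcard X hX, hcard Y hY]
    · rw [hX.card_eq_of_card_toLeft_le_one (h ▸ card_le_univ _),
        hY.card_eq_of_card_toLeft_le_one (h ▸ card_le_univ _)]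
    · rw [hX.card_eq_of_card_toRight_le_one (h ▸ card_le_univ _),
        hY.card_eq_of_card_toRight_le_one (h ▸ card_le_univ _)]

/-- For `r ≥ 1` and `s ≥ 1`, the complete bipartite graph `K_{r,s}` is
well-f-covered if and only if `r = s` or `r = 1` or `s = 1`. -/
theorem stmt19 (r s : ℕ) (hr : 1 ≤ r) (hs : 1 ≤ s) :
    WellFCovered (completeBipartiteGraph (Fin r) (Fin s)) ↔
      (r = s ∨ r = 1 ∨ s = 1) := by
  have : NeZero r := ⟨by omega⟩
  have : NeZero s := ⟨by omega⟩
  simpa using wellFCovered_completeBipartiteGraph_iff (α := Fin r) (β := Fin s)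
end
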